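/- Let M be a real vector space. Let C be the ℕ-indexed chain complex of real vector spaces with C_k = M × M for every k and differentials d_k : C_k → C_{k−1} given by d_k(a,b) = (k·b, 0) for k ≥ 1 and d_0 = 0 (one checks d_{k} ∘ d_{k+1} = 0), and let D be the chain complex with D_0 = M and D_k = 0 for k ≥ 1. Then: (i) the maps π : C → D given by π_0(a,b) = b and π_k = 0 for k ≥ 1, and e : D → C given by e_0(m) = (0,m), are chain maps satisfying π ∘ e = id_D; (ii) the maps K_k : C_k → C_{k+1} defined by K_k(a,b) = (0, (1/(k+1))·a) form a chain homotopy from e ∘ π to the identity of C, i.e. d_{k+1} ∘ K_k + K_{k−1} ∘ d_k = id_{C_k} − (e ∘ π)_k for all k ≥ 0 (with K_{−1} = 0). -/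
import Mathlib


/-- The algebraic homotopy in the `ψ`-direction of the relative Spencer complex of
`X × ℝ^{0|1}`: for the chain complex `C_k = M × M` with `d_k (a,b) = (k·b, 0)`,
the maps `π` (projection, degree 0) and `e` (insertion of `ψ`) are chain maps to and from
the complex `D` concentrated in degree `0`, `π ∘ e = id`, and `K_k (a,b) = (0, a/(k+1))`
is a chain homotopy from `e ∘ π` to the identity. -/
theorem spencer_homotopy
    (M : Type*) [AddCommGroup M] [Module ℝ M]
    (d : ℕ → M × M → M × M) (hd : ∀ (k : ℕ) (a b : M), d k (a, b) = ((k : ℝ) • b, 0))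
    (π : ℕ → M × M → M) (hπ0 : ∀ a b : M, π 0 (a, b) = b) (hπ : ∀ k, 1 ≤ k → π k = 0)
    (e : ℕ → M → M × M) (he0 : ∀ m : M, e 0 m = (0, m)) (he : ∀ k, 1 ≤ k → e k = 0)
    (K : ℕ → M × M → M × M)
    (hK : ∀ (k : ℕ) (a b : M), K k (a, b) = (0, ((k : ℝ) + 1)⁻¹ • a)) :
    (∀ (k : ℕ) (p : M × M), d k (d (k + 1) p) = 0) ∧
    (∀ k, 1 ≤ k → ∀ p : M × M, π (k - 1) (d k p) = 0) ∧
    (∀ k, 1 ≤ k → ∀ m : M, d k (e k m) = 0) ∧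
    (∀ m : M, π 0 (e 0 m) = m) ∧
    (∀ p : M × M, d 1 (K 0 p) = p - e 0 (π 0 p)) ∧
    (∀ k, 1 ≤ k → ∀ p : M × M,
      d (k + 1) (K k p) + K (k - 1) (d k p) = p - e k (π k p)) := by
  refine ⟨?_, ?_, ?_, ?_, ?_, ?_⟩
  · intro k ⟨a, b⟩
    rw [hd, hd, smul_zero]
    exact Prod.ext rfl rfl
  · intro k hk ⟨a, b⟩
    rw [hd]
    rcases Nat.exists_eq_add_of_le hk with ⟨j, rfl⟩
    cases j with
    | zero => simpa using hπ0 _ _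
    | succ n => rw [show 1 + (n + 1) - 1 = n + 1 from by omega, hπ (n + 1) (by omega)]; rfl
  · intro k hk m
    rw [he k hk]
    simp [hd]
  · intro m; rw [he0, hπ0]
  · intro ⟨a, b⟩
    rw [hK, hd, hπ0, he0]
    norm_num
  · intro k hk ⟨a, b⟩
    rw [hK, hd, hd, hK, hπ k hk, he k hk]
    have h1 : ((k - 1 : ℕ) : ℝ) + 1 = (k : ℝ) := by
      rcases Nat.exists_eq_add_of_le hk with ⟨j, rfl⟩
      push_cast [Nat.add_sub_cancel_left]; ring
    have hkne : (k : ℝ) ≠ 0 := Nat.cast_ne_zero.mpr (by omega)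
    refine Prod.ext ?_ ?_ <;> simp [h1, smul_smul]
    · rw [mul_inv_cancel₀ (by positivity), one_smul]
    · rw [inv_mul_cancel₀ hkne, one_smul]
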